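/- arXiv:math/0001070 — 4 statements merged into one kernel-verified Lean document; each statement's English description precedes it below -/
import Mathlib

section
/- Let μ_t (for t > 0) be a family of probability measures on the space of finite subsets of [0,t] such that: (i) μ_{s+t} is the law of C₁ ∪ (C₂ + s) where C₁ ~ μ_s and C₂ ~ μ_t are independent; (ii) μ_t({∅}) = e^{−λt} for some fixed λ ≥ 0 and all t > 0. Then μ_t is the law of the point set of a Poisson point process of intensity λ on [0,t]; in particular, the number of points of a μ_t-distributed set has Poisson distribution with parameter λt. -/
/-!
Cutting `[0, s + t]` at `s` shows that `μ_t` is stationary: the probability that a fixed point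
`x ∈ (0, t]` belongs to `C` does not depend on `x`. A finite set contains only finitely many of
infinitely many such points, so this probability is `0`, and almost surely `C ⊆ [0, t)`.
Cut `[0, t)` into `n` cells of width `t / n`. The events that the cells meet `C` are independent,
each of probability `1 - e^{-λt/n}`, so the number of cells met is binomial. As `n → ∞` it eventually
equals `#C`, while the binomial law tends to the Poisson law of parameter `λt`.
-/

open MeasureTheory ProbabilityTheory Classical

noncomputable instance : MeasurableSpace (Finset ℝ) := ⊤

open Filter Topology Set Finset.HasAntidiagonal

instance : DiscreteMeasurableSpace (Finset ℝ) := ⟨fun _ => MeasurableSpace.measurableSet_top⟩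

lemma ae_prod_and {α β : Type*} [MeasurableSpace α] [MeasurableSpace β] {μ : Measure α}
    {ν : Measure β} [SFinite ν] {P : α → Prop} {Q : β → Prop}
    (hP : ∀ᵐ a ∂μ, P a) (hQ : ∀ᵐ b ∂ν, Q b) : ∀ᵐ p ∂μ.prod ν, P p.1 ∧ Q p.2 :=
  (Measure.quasiMeasurePreserving_fst.ae hP).and (Measure.quasiMeasurePreserving_snd.ae hQ)

lemma measureReal_prod_add_eq_sum {α β : Type*} [MeasurableSpace α] [MeasurableSpace β]
    {μ : Measure α} {ν : Measure β} [IsFiniteMeasure μ] [IsFiniteMeasure ν]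
    {f : α → ℕ} {g : β → ℕ} (hf : Measurable f) (hg : Measurable g) (k : ℕ) :
    (μ.prod ν).real {p | f p.1 + g p.2 = k} =
      ∑ ij ∈ antidiagonal k, μ.real {a | f a = ij.1} * ν.real {b | g b = ij.2} := by
  have hset : {p : α × β | f p.1 + g p.2 = k} =
      ⋃ ij ∈ antidiagonal k, {a | f a = ij.1} ×ˢ {b | g b = ij.2} := by
    ext p
    simp
  have hdisj : (antidiagonal k : Set (ℕ × ℕ)).PairwiseDisjoint
      fun ij => {a | f a = ij.1} ×ˢ {b | g b = ij.2} := by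
    rintro ij - ij' - hne
    refine Set.disjoint_left.2 fun p hp hp' => hne ?_
    exact Prod.ext (hp.1.symm.trans hp'.1) (hp.2.symm.trans hp'.2)
  rw [hset, measureReal_biUnion_finset hdisj fun ij _ =>
    (hf (measurableSet_singleton _)).prod (hg (measurableSet_singleton _))]
  simp only [measureReal_prod_prod]

lemma sum_antidiagonal_choose_mul_pow {R : Type*} [CommSemiring R] (m n k : ℕ) (p q : R) :
    ∑ ij ∈ antidiagonal k,
        (m.choose ij.1 * p ^ ij.1 * q ^ (m - ij.1)) * (n.choose ij.2 * p ^ ij.2 * q ^ (n - ij.2)) =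
      (m + n).choose k * p ^ k * q ^ (m + n - k) := by
  have hterm : ∀ ij ∈ antidiagonal k,
      (m.choose ij.1 * p ^ ij.1 * q ^ (m - ij.1)) * (n.choose ij.2 * p ^ ij.2 * q ^ (n - ij.2)) =
        (m.choose ij.1 * n.choose ij.2 : ℕ) * (p ^ k * q ^ (m + n - k)) := by
    rintro ⟨i, j⟩ hij
    rw [Finset.HasAntidiagonal.mem_antidiagonal] at hij
    subst hij
    by_cases hi : i ≤ m
    · by_cases hj : j ≤ n
      · obtain ⟨a, rfl⟩ := Nat.exists_eq_add_of_le hi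
        obtain ⟨b, rfl⟩ := Nat.exists_eq_add_of_le hj
        rw [show i + a + (j + b) - (i + j) = a + b by omega]
        simp only [Nat.add_sub_cancel_left, Nat.cast_mul, pow_add]
        ring
      · simp [Nat.choose_eq_zero_of_lt (not_le.1 hj)]
    · simp [Nat.choose_eq_zero_of_lt (not_le.1 hi)]
  rw [Finset.sum_congr rfl hterm, ← Finset.sum_mul, ← Nat.cast_sum, ← Nat.add_choose_eq, mul_assoc]

lemma tendsto_natCast_mul_one_sub_exp (c : ℝ) :
    Tendsto (fun n : ℕ => (n : ℝ) * (1 - Real.exp (-c / n))) atTop (𝓝 c) := by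
  have hderiv : HasDerivAt (fun x => Real.exp (-c * x)) (-c) 0 := by
    simpa using ((hasDerivAt_id (0 : ℝ)).const_mul (-c)).exp
  have hinv : Tendsto (fun n : ℕ => (n : ℝ)⁻¹) atTop (𝓝[≠] 0) :=
    (tendsto_inv_atTop_nhdsGT_zero.comp tendsto_natCast_atTop_atTop).mono_right
      (nhdsWithin_mono _ fun _ hx => ne_of_gt hx)
  have hslope := ((hasDerivAt_iff_tendsto_slope_zero.1 hderiv).comp hinv).neg
  rw [neg_neg] at hslope
  refine hslope.congr fun n => ?_
  simp only [Function.comp_apply, inv_inv, smul_eq_mul, zero_add, mul_zero, Real.exp_zero]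
  ring_nf

noncomputable def unionShift (s : ℝ) (p : Finset ℝ × Finset ℝ) : Finset ℝ :=
  p.1 ∪ p.2.image (· + s)

@[simp]
lemma mem_unionShift {s x : ℝ} {p : Finset ℝ × Finset ℝ} :
    x ∈ unionShift s p ↔ x ∈ p.1 ∨ x - s ∈ p.2 := by
  simp [unionShift, sub_eq_add_neg]

/-- Number of cells `[i w, (i + 1) w)`, `i : ℤ`, met by `C`. -/
noncomputable def cellCount (w : ℝ) (C : Finset ℝ) : ℕ :=
  (C.image fun x => ⌊x / w⌋).card

lemma cellCount_unionShift {w : ℝ} (hw : 0 < w) (n : ℕ) {A B : Finset ℝ}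
    (hA : ∀ a ∈ A, a < n * w) (hB : ∀ b ∈ B, 0 ≤ b) :
    cellCount w (unionShift (n * w) (A, B)) = cellCount w A + cellCount w B := by
  have hshift : (B.image (· + n * w)).image (fun x => ⌊x / w⌋) =
      (B.image fun x => ⌊x / w⌋).image (· + (n : ℤ)) := by
    simp only [Finset.image_image]
    refine Finset.image_congr fun b _ => ?_
    simp [add_div, mul_div_cancel_right₀ _ hw.ne', Int.floor_add_natCast]
  have hdisj : Disjoint (A.image fun x => ⌊x / w⌋)
      ((B.image fun x => ⌊x / w⌋).image (· + (n : ℤ))) := by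
    simp only [Finset.disjoint_left, Finset.mem_image]
    rintro _ ⟨a, ha, rfl⟩ ⟨_, ⟨b, hb, rfl⟩, hab⟩
    have h₁ : ⌊a / w⌋ < n := Int.floor_lt.2 (by rw [div_lt_iff₀ hw]; exact_mod_cast hA a ha)
    have h₂ : 0 ≤ ⌊b / w⌋ := Int.floor_nonneg.2 (div_nonneg (hB b hb) hw.le)
    omega
  rw [cellCount, unionShift, Finset.image_union, hshift, Finset.card_union_of_disjoint hdisj,
    Finset.card_image_of_injective _ (add_left_injective _), cellCount, cellCount]

lemma cellCount_of_subset_Ico {w : ℝ} (hw : 0 < w) {C : Finset ℝ} (hC : (C : Set ℝ) ⊆ Ico 0 w) :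
    cellCount w C = if C = ∅ then 0 else 1 := by
  split_ifs with h
  · simp [cellCount, h]
  · have : C.image (fun x => ⌊x / w⌋) = {0} := by
      refine (Finset.Nonempty.subset_singleton_iff
        ((Finset.nonempty_iff_ne_empty.2 h).image _)).1 fun _ hk => ?_
      obtain ⟨x, hx, rfl⟩ := Finset.mem_image.1 hk
      have := hC hx
      rw [Finset.mem_singleton, Int.floor_eq_zero_iff]
      exact ⟨div_nonneg this.1 hw.le, (div_lt_one hw).2 this.2⟩
    simp [cellCount, this]

lemma cellCount_eq_card {w : ℝ} (hw : 0 < w) {C : Finset ℝ}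
    (hC : ∀ x ∈ C, ∀ y ∈ C, x ≠ y → w < |x - y|) : cellCount w C = C.card := by
  refine Finset.card_image_of_injOn fun x hx y hy hxy => by_contra fun hne => ?_
  have := Int.abs_sub_lt_one_of_floor_eq_floor hxy
  rw [← sub_div, abs_div, abs_of_pos hw, div_lt_one hw] at this
  exact (hC x hx y hy hne).not_gt this

lemma eventually_cellCount_eq_card {ι : Type*} {l : Filter ι} {w : ι → ℝ}
    (hw : Tendsto w l (𝓝[>] 0)) (C : Finset ℝ) : ∀ᶠ i in l, cellCount (w i) C = C.card := by
  have hsep : ∀ᶠ i in l, ∀ p ∈ C ×ˢ C, p.1 ≠ p.2 → w i < |p.1 - p.2| :=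
    (C ×ˢ C).eventually_all.2 fun p _ => by
      by_cases h : p.1 = p.2
      · exact .of_forall fun _ h' => absurd h h'
      · exact ((tendsto_nhds_of_tendsto_nhdsWithin hw).eventually
          (gt_mem_nhds (abs_sub_pos.2 h))).mono fun _ hi _ => hi
  filter_upwards [hsep, hw self_mem_nhdsWithin] with i hi hpos
  exact cellCount_eq_card hpos fun x hx y hy => hi (x, y) (Finset.mk_mem_product hx hy)

structure IsConcatFamily (μ : ℝ → Measure (Finset ℝ)) : Prop where
  isProbabilityMeasure : ∀ t, 0 < t → IsProbabilityMeasure (μ t)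
  ae_subset_Icc : ∀ t, 0 < t → ∀ᵐ (C : Finset ℝ) ∂(μ t), (C : Set ℝ) ⊆ Icc 0 t
  map_unionShift : ∀ s t, 0 < s → 0 < t → μ (s + t) = ((μ s).prod (μ t)).map (unionShift s)

namespace IsConcatFamily

variable {μ : ℝ → Measure (Finset ℝ)} {lam s t w x : ℝ}

lemma measure_eq_prod_preimage (hμ : IsConcatFamily μ) (hs : 0 < s) (ht : 0 < t)
    (S : Set (Finset ℝ)) : μ (s + t) S = ((μ s).prod (μ t)) (unionShift s ⁻¹' S) := by
  have := hμ.isProbabilityMeasure (s + t) (add_pos hs ht)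
  -- the product σ-algebra need not be discrete, but the image measure would vanish otherwise
  have hmeas : AEMeasurable (unionShift s) ((μ s).prod (μ t)) := by
    by_contra h
    have := hμ.map_unionShift s t hs ht
    rw [Measure.map_of_not_aemeasurable h] at this
    exact IsProbabilityMeasure.ne_zero _ this
  rw [hμ.map_unionShift s t hs ht, Measure.map_apply_of_aemeasurable hmeas .of_discrete]

lemma ae_prod_subset_Icc (hμ : IsConcatFamily μ) (hs : 0 < s) (ht : 0 < t) :
    ∀ᵐ p ∂(μ s).prod (μ t), (p.1 : Set ℝ) ⊆ Icc 0 s ∧ (p.2 : Set ℝ) ⊆ Icc 0 t :=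
  have := hμ.isProbabilityMeasure t ht
  ae_prod_and (P := fun A : Finset ℝ => (A : Set ℝ) ⊆ Icc 0 s)
    (Q := fun B : Finset ℝ => (B : Set ℝ) ⊆ Icc 0 t) (hμ.ae_subset_Icc s hs) (hμ.ae_subset_Icc t ht)

lemma measure_mem_le_measure_add (hμ : IsConcatFamily μ) (hs : 0 < s) (ht : 0 < t) :
    μ s {C | x ∈ C} ≤ μ (s + t) {C | x ∈ C} := by
  have := hμ.isProbabilityMeasure t ht
  calc μ s {C | x ∈ C} = ((μ s).prod (μ t)) ({C | x ∈ C} ×ˢ univ) := by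
        rw [Measure.prod_prod, measure_univ, mul_one]
    _ ≤ μ (s + t) {C | x ∈ C} := by
        rw [hμ.measure_eq_prod_preimage hs ht]
        exact measure_mono fun p hp => mem_unionShift.2 (Or.inl hp.1)

lemma measure_mem_add_of_lt (hμ : IsConcatFamily μ) (hs : 0 < s) (ht : 0 < t) (hx : x < s) :
    μ (s + t) {C | x ∈ C} = μ s {C | x ∈ C} := by
  have := hμ.isProbabilityMeasure t ht
  rw [hμ.measure_eq_prod_preimage hs ht, ← mul_one (μ s _), ← measure_univ (μ := μ t),
    ← Measure.prod_prod]
  refine measure_congr (eventuallyEq_set.2 ?_)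
  filter_upwards [hμ.ae_prod_subset_Icc hs ht] with p hp
  have : x - s ∉ p.2 := fun h => by linarith [(hp.2 h).1]
  simp [this]

lemma measure_mem_add_of_gt (hμ : IsConcatFamily μ) (hs : 0 < s) (ht : 0 < t) (hx : s < x) :
    μ (s + t) {C | x ∈ C} = μ t {C | x - s ∈ C} := by
  have := hμ.isProbabilityMeasure s hs
  have := hμ.isProbabilityMeasure t ht
  rw [hμ.measure_eq_prod_preimage hs ht, ← one_mul (μ t _), ← measure_univ (μ := μ s),
    ← Measure.prod_prod]
  refine measure_congr (eventuallyEq_set.2 ?_)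
  filter_upwards [hμ.ae_prod_subset_Icc hs ht] with p hp
  have : x ∉ p.1 := fun h => by linarith [(hp.1 h).2]
  simp [this]

-- Cutting off `b - a` on the left moves `b` to `a`; cutting it off on the right leaves `a` fixed.
lemma measure_mem_eq_of_lt (hμ : IsConcatFamily μ) {a b T : ℝ} (ha : 0 < a) (hab : a < b)
    (hbT : b < T) : μ T {C | b ∈ C} = μ T {C | a ∈ C} := by
  have h₁ := hμ.measure_mem_add_of_gt (sub_pos.2 hab) (by linarith : 0 < T - (b - a))
    (by linarith : b - a < b)
  have h₂ := hμ.measure_mem_add_of_lt (by linarith : 0 < T - (b - a)) (sub_pos.2 hab)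
    (by linarith : a < T - (b - a))
  rw [add_sub_cancel, sub_sub_cancel] at h₁
  rw [sub_add_cancel] at h₂
  rw [h₁, h₂]

lemma measure_mem_eq_zero_of_lt (hμ : IsConcatFamily μ) {T : ℝ} (hx : 0 < x) (hxT : x < T) :
    μ T {C | x ∈ C} = 0 := by
  have := hμ.isProbabilityMeasure T (hx.trans hxT)
  set a : ℕ → ℝ := fun n => x / (n + 1)
  have ha_pos (n : ℕ) : 0 < a n := by positivity
  have ha_le (n : ℕ) : a n ≤ x := div_le_self hx.le (by linarith [n.cast_nonneg (α := ℝ)])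
  have ha_inj : Function.Injective a := fun m n h => by
    have h' : (m : ℝ) + 1 = n + 1 := by
      simp only [a] at h
      field_simp at h
      linarith
    exact_mod_cast add_right_cancel h'
  have hconst (n : ℕ) : μ T {C | a n ∈ C} = μ T {C | x ∈ C} := by
    rcases (ha_le n).lt_or_eq with h | h
    · exact (hμ.measure_mem_eq_of_lt (ha_pos n) h hxT).symm
    · rw [h]
  -- a finite set contains only finitely many of the distinct points `a n`
  have hlim : Tendsto (fun n => μ T {C | a n ∈ C}) atTop (𝓝 (μ T ∅)) :=
    tendsto_measure_of_tendsto_indicator_of_isFiniteMeasure _ _ (fun _ => .of_discrete)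
      fun C => by
        simpa [← Nat.cofinite_eq_atTop] using
          ha_inj.tendsto_cofinite.eventually C.finite_toSet.eventually_cofinite_notMem
  simp only [hconst, measure_empty] at hlim
  exact tendsto_nhds_unique tendsto_const_nhds hlim

lemma measure_mem_eq_zero (hμ : IsConcatFamily μ) (hx : 0 < x) (hxt : x ≤ t) :
    μ t {C | x ∈ C} = 0 := by
  rcases hxt.lt_or_eq with h | rfl
  · exact hμ.measure_mem_eq_zero_of_lt hx h
  · exact le_antisymm ((hμ.measure_mem_le_measure_add hx one_pos).trans_eq
      (hμ.measure_mem_eq_zero_of_lt hx (lt_add_one x))) zero_le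

lemma ae_subset_Ico (hμ : IsConcatFamily μ) (ht : 0 < t) :
    ∀ᵐ (C : Finset ℝ) ∂(μ t), (C : Set ℝ) ⊆ Ico 0 t := by
  filter_upwards [hμ.ae_subset_Icc t ht, measure_eq_zero_iff_ae_notMem.1
    (hμ.measure_mem_eq_zero ht le_rfl)] with C hC htC x hx
  exact ⟨(hC hx).1, (hC hx).2.lt_of_ne fun h => htC (h ▸ hx)⟩

lemma measureReal_cellCount_self (hμ : IsConcatFamily μ)
    (hatom : ∀ t, 0 < t → μ t {∅} = ENNReal.ofReal (Real.exp (-lam * t))) (hw : 0 < w) (k : ℕ) :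
    (μ w).real {C | cellCount w C = k} =
      (1 : ℕ).choose k * (1 - Real.exp (-lam * w)) ^ k * Real.exp (-lam * w) ^ (1 - k) := by
  have := hμ.isProbabilityMeasure w hw
  have hempty : (μ w).real {∅} = Real.exp (-lam * w) := by
    rw [measureReal_def, hatom w hw, ENNReal.toReal_ofReal (Real.exp_pos _).le]
  have hcongr : {C | cellCount w C = k} =ᵐ[μ w] {C | (if C = ∅ then 0 else 1) = k} := by
    refine eventuallyEq_set.2 ?_
    filter_upwards [hμ.ae_subset_Ico hw] with C hC
    rw [cellCount_of_subset_Ico hw hC]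
  rw [measureReal_congr hcongr]
  match k with
  | 0 => simpa using hempty
  | 1 =>
    have : {C : Finset ℝ | (if C = ∅ then 0 else 1) = 1} = {∅}ᶜ := by ext; simp
    rw [this, measureReal_compl .of_discrete, hempty]
    simp
  | k + 2 =>
    have : {C : Finset ℝ | (if C = ∅ then 0 else 1) = k + 2} = ∅ := by
      ext C
      simp only [mem_ofPred_eq, mem_empty_iff_false, iff_false]
      split_ifs <;> simp
    simp [this, Nat.choose_eq_zero_of_lt (by omega : 1 < k + 2)]

lemma measureReal_cellCount (hμ : IsConcatFamily μ)
    (hatom : ∀ t, 0 < t → μ t {∅} = ENNReal.ofReal (Real.exp (-lam * t))) (hw : 0 < w)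
    {n : ℕ} (hn : 1 ≤ n) (k : ℕ) :
    (μ (n * w)).real {C | cellCount w C = k} =
      n.choose k * (1 - Real.exp (-lam * w)) ^ k * Real.exp (-lam * w) ^ (n - k) := by
  induction n, hn using Nat.le_induction generalizing k with
  | base => simpa using hμ.measureReal_cellCount_self hatom hw k
  | succ n hn ih =>
    have hnw : 0 < n * w := by positivity
    have := hμ.isProbabilityMeasure w hw
    have := hμ.isProbabilityMeasure _ hnw
    have hcongr : unionShift (n * w) ⁻¹' {C | cellCount w C = k} =ᵐ[(μ (n * w)).prod (μ w)]
        {p | cellCount w p.1 + cellCount w p.2 = k} := by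
      refine eventuallyEq_set.2 ?_
      filter_upwards [ae_prod_and (hμ.ae_subset_Ico hnw) (hμ.ae_subset_Ico hw)] with p hp
      change cellCount w (unionShift _ p) = k ↔ _
      rw [cellCount_unionShift hw n (fun a ha => (hp.1 ha).2) (fun b hb => (hp.2 hb).1)]
    rw [Nat.cast_succ, add_mul, one_mul, measureReal_def, hμ.measure_eq_prod_preimage hnw hw,
      ← measureReal_def, measureReal_congr hcongr,
      measureReal_prod_add_eq_sum .of_discrete .of_discrete]
    simp only [ih, hμ.measureReal_cellCount_self hatom hw]
    exact sum_antidiagonal_choose_mul_pow n 1 k _ _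

lemma measure_card_eq (hμ : IsConcatFamily μ)
    (hatom : ∀ t, 0 < t → μ t {∅} = ENNReal.ofReal (Real.exp (-lam * t))) (ht : 0 < t) (k : ℕ) :
    μ t {C | C.card = k} =
      ENNReal.ofReal (Real.exp (-(lam * t)) * (lam * t) ^ k / k.factorial) := by
  have := hμ.isProbabilityMeasure t ht
  have hmesh : Tendsto (fun n : ℕ => t / n) atTop (𝓝[>] 0) :=
    tendsto_nhdsWithin_iff.2 ⟨tendsto_const_div_atTop_nhds_zero_nat t,
      (eventually_ge_atTop 1).mono fun n hn => div_pos ht (by exact_mod_cast hn)⟩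
  have hcount : Tendsto (fun n : ℕ => μ t {C | cellCount (t / n) C = k}) atTop
      (𝓝 (μ t {C | C.card = k})) :=
    tendsto_measure_of_tendsto_indicator_of_isFiniteMeasure _ _ (fun _ => .of_discrete) fun C =>
      (eventually_cellCount_eq_card hmesh C).mono fun n hn => by simp [hn]
  have hrate : Tendsto (fun n : ℕ => (n : ℝ) * (1 - Real.exp (-lam * (t / n)))) atTop
      (𝓝 (lam * t)) := by
    refine (tendsto_natCast_mul_one_sub_exp (lam * t)).congr fun n => ?_
    ring_nf
  have hbinom : Tendsto (fun n : ℕ => μ t {C | cellCount (t / n) C = k}) atTop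
      (𝓝 (ENNReal.ofReal (Real.exp (-(lam * t)) * (lam * t) ^ k / k.factorial))) := by
    refine (ENNReal.tendsto_ofReal (tendsto_choose_mul_pow_of_tendsto_mul_atTop k hrate)).congr' ?_
    filter_upwards [eventually_ge_atTop 1] with n hn
    have hn' : (n : ℝ) ≠ 0 := by positivity
    rw [sub_sub_cancel, ← hμ.measureReal_cellCount hatom (div_pos ht (by positivity)) hn,
      mul_div_cancel₀ t hn', ofReal_measureReal]
  exact tendsto_nhds_unique hcount hbinom

end IsConcatFamily

/-- If `(μ_t)` is a family of probability measures on finite subsets of `[0,t]` which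
factorizes, `μ_{s+t}` being the law of `C₁ ∪ (C₂ + s)` with `C₁ ~ μ_s`, `C₂ ~ μ_t`
independent, and with `μ_t({∅}) = e^{-λ t}`, then the number of points of a
`μ_t`-distributed set is Poisson with parameter `λ t`. -/
theorem stmt_7 (μ : ℝ → Measure (Finset ℝ)) (lam : ℝ) (hlam : 0 ≤ lam)
    (hprob : ∀ t : ℝ, 0 < t → IsProbabilityMeasure (μ t))
    (hsupp : ∀ t : ℝ, 0 < t → μ t {C : Finset ℝ | (C : Set ℝ) ⊆ Set.Icc 0 t} = 1)
    (hfact : ∀ s t : ℝ, 0 < s → 0 < t →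
      μ (s + t) = ((μ s).prod (μ t)).map
        (fun p : Finset ℝ × Finset ℝ => p.1 ∪ p.2.image (fun x => x + s)))
    (hatom : ∀ t : ℝ, 0 < t →
      μ t {(∅ : Finset ℝ)} = ENNReal.ofReal (Real.exp (-lam * t))) :
    ∀ t : ℝ, 0 < t →
      (μ t).map (fun C : Finset ℝ => C.card) =
        poissonMeasure (Real.toNNReal (lam * t)) := by
  have hμ : IsConcatFamily μ := by
    refine ⟨hprob, fun t ht => ?_, hfact⟩
    have := hprob t ht
    exact (ae_iff_measure_eq MeasurableSet.of_discrete.nullMeasurableSet).2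
      (by rw [hsupp t ht, measure_univ])
  intro t ht
  refine Measure.ext_of_singleton fun k => ?_
  rw [Measure.map_apply .of_discrete .of_discrete, poissonMeasure_singleton,
    Real.coe_toNNReal _ (mul_nonneg hlam ht.le)]
  exact hμ.measure_card_eq hatom ht k
end

section
/- The function f : [0,∞) → [0,1) given by f(s) = √(1 − e^{−2γs}), for fixed γ ≥ 0, is concave on [0,∞). -/
theorem aux_comp {s t : Set ℝ} {f g : ℝ → ℝ} (hg : ConcaveOn ℝ t g)
    (hg' : MonotoneOn g t) (hf : ConcaveOn ℝ s f) (hst : ∀ x ∈ s, f x ∈ t) :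
    ConcaveOn ℝ s (g ∘ f) :=
  ⟨hf.1, fun _ hx _ hy _ _ ha hb hab =>
    (hg.2 (hst _ hx) (hst _ hy) ha hb hab).trans <|
      hg' (hg.1 (hst _ hx) (hst _ hy) ha hb hab)
          (hst _ <| hf.1 hx hy ha hb hab) <| hf.2 hx hy ha hb hab⟩

/-- For fixed `γ ≥ 0`, the function `s ↦ √(1 − e^{−2γs})` is concave on `[0, ∞)`. -/
theorem stmt_11 (γ : ℝ) (hγ : 0 ≤ γ) :
    ConcaveOn ℝ (Set.Ici (0 : ℝ))
      (fun s : ℝ => Real.sqrt (1 - Real.exp (-2 * γ * s))) := by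
  have hf : ConcaveOn ℝ (Set.Ici (0 : ℝ)) (fun s : ℝ => 1 - Real.exp (-2 * γ * s)) := by
    have : ConvexOn ℝ (Set.Ici (0 : ℝ)) (fun s : ℝ => Real.exp (-2 * γ * s)) := by
      have := (convexOn_exp.subset (Set.subset_univ _) convex_univ).comp_affineMap
        (LinearMap.toAffineMap (LinearMap.smulRight (LinearMap.id : ℝ →ₗ[ℝ] ℝ) (-2 * γ)))
      have h2 : ConvexOn ℝ ((LinearMap.toAffineMap (LinearMap.smulRight
          (LinearMap.id : ℝ →ₗ[ℝ] ℝ) (-2 * γ))) ⁻¹' Set.univ)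
          (Real.exp ∘ (LinearMap.toAffineMap (LinearMap.smulRight
          (LinearMap.id : ℝ →ₗ[ℝ] ℝ) (-2 * γ)))) := this
      refine (h2.subset (by simp) (convex_Ici 0)).congr ?_
      intro x _
      simp [mul_comm, mul_assoc]
    have := this.neg
    exact ⟨convex_Ici 0, fun x hx y hy a b ha hb hab => by
      have h := this.2 hx hy ha hb hab
      simp only [Pi.neg_apply, smul_eq_mul] at h ⊢
      nlinarith⟩
  refine (aux_comp (Real.strictConcaveOn_sqrt.concaveOn) ?_ hf ?_ : _)
  · intro x hx y hy hxy
    exact Real.sqrt_le_sqrt hxy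
  · intro x hx
    have : -2 * γ * x ≤ 0 := by
      have : 0 ≤ x := hx
      nlinarith
    have := Real.exp_le_one_iff.mpr this
    simp [Set.mem_Ici]; linarith
end

section
/- Let S = { k − 2^{−l} − 2^{−l−m} : k,l,m ≥ 1 } ∪ { k − 2^{−l} : k,l ≥ 1 } ∪ { 0,1,2,… }. Then S is closed, countable, 1-periodic, well-ordered by <, and its second derived set S'' = { 1, 2, 3, … } is nonempty. -/
/-
Let `D = {0} ∪ {2^{-l} : l ≥ 1}` and `T = {a (1 + c) : a, c ∈ D}`, a compact subset of `[0, 3/4]`;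
then `S = {0} ∪ (N₁ - T)` with `N₁ = {1, 2, …}`. Since `T` is compact, `N₁ - T` is closed, and
since `T` has diameter `< 1`, the accumulation points of `N₁ - T` are found one unit interval at a
time: `(N₁ - T)' = N₁ - T'`. Distinct elements of `D` differ by a factor of at least 2, so every
`2^{-l}` is isolated in `D` and `D' = {0}`; for the same reason a point `a (1 + c)` of `T` with
`a, c ≠ 0` is isolated, so `T' = D`. Hence `S' = N₁ - D` and `S'' = N₁ - {0} = N₁`.
Finally `a (1 + c) = a + a c` with `a c ∈ D`, so `S ⊆ ℕ + (-D) + (-D)`, a sum of partially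
well-ordered sets, which rules out strictly decreasing sequences.
-/

/-- The set `S = {k − 2^{−l} − 2^{−l−m}} ∪ {k − 2^{−l}} ∪ ℕ` (k, l, m ≥ 1). -/
def exampleS₂ : Set ℝ :=
  {x : ℝ | ∃ k l m : ℕ, 1 ≤ k ∧ 1 ≤ l ∧ 1 ≤ m ∧
      x = (k : ℝ) - (2 : ℝ) ^ (-(l : ℤ)) - (2 : ℝ) ^ (-((l : ℤ) + (m : ℤ)))} ∪
    {x : ℝ | ∃ k l : ℕ, 1 ≤ k ∧ 1 ≤ l ∧ x = (k : ℝ) - (2 : ℝ) ^ (-(l : ℤ))} ∪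
    {x : ℝ | ∃ k : ℕ, x = (k : ℝ)}

open Set Filter Topology Pointwise

lemma accPt_of_tendsto {X : Type*} [TopologicalSpace X] {x : X} {s : Set X} {u : ℕ → X}
    (hu : ∀ n, u n ∈ s) (hne : ∀ n, u n ≠ x) (hlim : Tendsto u atTop (𝓝 x)) :
    AccPt x (𝓟 s) :=
  accPt_iff_frequently.2 <| hlim.frequently <| .of_forall fun n => ⟨hne n, hu n⟩

lemma not_accPt_of_le_dist {X : Type*} [PseudoMetricSpace X] {x : X} {s : Set X} {δ : ℝ}
    (hδ : 0 < δ) (h : ∀ y ∈ s, y ≠ x → δ ≤ dist y x) : ¬ AccPt x (𝓟 s) := by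
  rw [accPt_iff_nhds]
  push Not
  exact ⟨Metric.ball x δ, Metric.ball_mem_nhds x hδ, fun y ⟨hyx, hys⟩ =>
    by_contra fun hne => (h y hys hne).not_gt (Metric.mem_ball.1 hyx)⟩

lemma Homeomorph.accPt_image_iff {X Y : Type*} [TopologicalSpace X] [TopologicalSpace Y]
    (e : X ≃ₜ Y) {x : X} {s : Set X} : AccPt (e x) (𝓟 (e '' s)) ↔ AccPt x (𝓟 s) := by
  refine ⟨fun h => ?_, fun h => by simpa using h.map e.continuous.continuousAt e.injective⟩
  simpa [Set.image_image] using h.map e.symm.continuous.continuousAt e.symm.injective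

lemma accPt_congr_of_inter_eq {X : Type*} [TopologicalSpace X] {x : X} {s t U : Set X}
    (hU : U ∈ 𝓝 x) (h : s ∩ U = t ∩ U) : AccPt x (𝓟 s) ↔ AccPt x (𝓟 t) := by
  simp only [accPt_iff_frequently]
  refine frequently_congr ?_
  filter_upwards [hU] with y hy
  rw [show y ∈ s ↔ y ∈ t from by simpa [hy] using congrArg (y ∈ ·) h]

def posNatSub (P : Set ℝ) : Set ℝ := image2 (fun (k : ℕ) t => (k : ℝ) - t) {k | 1 ≤ k} P

namespace posNatSub

variable {P : Set ℝ}

lemma eq_sub : posNatSub P = ((↑) '' {k : ℕ | 1 ≤ k}) - P := by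
  rw [posNatSub, ← image2_sub, image2_image_left]

lemma countable (hP : P.Countable) : (posNatSub P).Countable :=
  (to_countable _).image2 hP _

lemma isClosed (hP : IsCompact P) : IsClosed (posNatSub P) := by
  rw [eq_sub, sub_eq_add_neg]
  exact (Nat.isClosedEmbedding_coe_real.isClosedMap _ (isClosed_discrete _)).add_right_of_isCompact
    hP.neg

lemma isPWO (hP : (-P).IsPWO) : (posNatSub P).IsPWO := by
  refine (((isPWO_of_wellQuasiOrderedLE univ).image_of_monotone
    Nat.mono_cast).add hP).mono ?_
  rintro _ ⟨k, -, t, ht, rfl⟩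
  exact ⟨k, mem_image_of_mem _ (mem_univ k), -t, by simpa using ht, sub_eq_add_neg _ _ |>.symm⟩

lemma mem_insert_zero_iff_add_one_mem (h0 : 0 ∈ P) (hP : P ⊆ Ici 0) {s : ℝ} (hs : 0 ≤ s) :
    s ∈ insert 0 (posNatSub P) ↔ s + 1 ∈ insert 0 (posNatSub P) := by
  constructor
  · rintro (rfl | ⟨k, -, t, ht, rfl⟩)
    · exact .inr ⟨1, le_refl 1, 0, h0, by norm_num⟩
    · exact .inr ⟨k + 1, by simp, t, ht, by push_cast; ring⟩
  · rintro (h | ⟨k, hk, t, ht, hkt⟩)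
    · linarith
    obtain ⟨k, rfl⟩ := Nat.exists_eq_add_of_le' hk
    rcases Nat.eq_zero_or_pos k with rfl | hk
    · left
      have ht0 : 0 ≤ t := hP ht
      push_cast at hkt
      linarith
    · exact .inr ⟨k, hk, t, ht, by push_cast at hkt; linarith⟩

variable {r : ℝ}

lemma inter_ball_eq (hP : P ⊆ Icc 0 r) {k : ℕ} (hk : 1 ≤ k) {t : ℝ} (ht : t ∈ Icc 0 r) :
    posNatSub P ∩ Metric.ball (k - t) (1 - r) =
      (fun y : ℝ => (k : ℝ) - y) '' P ∩ Metric.ball (k - t) (1 - r) := by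
  refine Subset.antisymm ?_ (inter_subset_inter_left _ fun _ ⟨t', ht', h⟩ => ⟨k, hk, t', ht', h⟩)
  rintro _ ⟨⟨k', -, t', ht', rfl⟩, hball⟩
  refine ⟨⟨t', ht', ?_⟩, hball⟩
  have ht'r := hP ht'
  rw [Metric.mem_ball, Real.dist_eq, abs_lt] at hball
  have hk' : k' = k := by
    have h1 : k' < k + 1 := by exact_mod_cast (by linarith [ht.1, ht'r.2] : (k' : ℝ) < k + 1)
    have h2 : k < k' + 1 := by exact_mod_cast (by linarith [ht.2, ht'r.1] : (k : ℝ) < k' + 1)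
    omega
  rw [hk']

lemma accPt_sub_iff (hP : P ⊆ Icc 0 r) (hr : r < 1) {k : ℕ} (hk : 1 ≤ k) {t : ℝ} (ht : t ∈ P) :
    AccPt ((k : ℝ) - t) (𝓟 (posNatSub P)) ↔ AccPt t (𝓟 P) := by
  rw [accPt_congr_of_inter_eq (Metric.ball_mem_nhds _ (sub_pos.2 hr)) (inter_ball_eq hP hk (hP ht))]
  exact (Homeomorph.subLeft (k : ℝ)).accPt_image_iff

lemma derivedSet_eq (hP : IsCompact P) (hPr : P ⊆ Icc 0 r) (hr : r < 1) :
    derivedSet (posNatSub P) = posNatSub (derivedSet P) := by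
  ext x
  constructor
  · intro hx
    obtain ⟨k, hk, t, ht, rfl⟩ := (isClosed_iff_derivedSet_subset _).1 (isClosed hP) hx
    exact ⟨k, hk, t, (accPt_sub_iff hPr hr hk ht).1 hx, rfl⟩
  · rintro ⟨k, hk, t, ht, rfl⟩
    exact (accPt_sub_iff hPr hr hk ((isClosed_iff_derivedSet_subset _).1 hP.isClosed ht)).2 ht

end posNatSub

def dyadicSet : Set ℝ := insert 0 (range fun n : ℕ => (2 : ℝ)⁻¹ ^ (n + 1))

namespace dyadicSet

lemma subset_Icc : dyadicSet ⊆ Icc 0 2⁻¹ := by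
  rintro _ (rfl | ⟨n, rfl⟩)
  · norm_num
  · exact ⟨by positivity, pow_le_of_le_one (by norm_num) (by norm_num) n.succ_ne_zero⟩

lemma tendsto_pow : Tendsto (fun n : ℕ => (2 : ℝ)⁻¹ ^ (n + 1)) atTop (𝓝 0) :=
  (tendsto_pow_atTop_nhds_zero_of_lt_one (by norm_num) (by norm_num)).comp
    (tendsto_add_atTop_nat 1)

lemma isCompact : IsCompact dyadicSet := tendsto_pow.isCompact_insert_range

lemma countable : dyadicSet.Countable := (countable_range _).insert 0

lemma mul_mem {a c : ℝ} (ha : a ∈ dyadicSet) (hc : c ∈ dyadicSet) : a * c ∈ dyadicSet := by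
  rcases ha with rfl | ⟨n, rfl⟩
  · exact .inl (zero_mul c)
  rcases hc with rfl | ⟨m, rfl⟩
  · exact .inl (mul_zero _)
  · exact .inr ⟨n + m + 1, by ring⟩

lemma isPWO_neg : (-dyadicSet).IsPWO := by
  have hmono : Monotone fun n : ℕ => -(2 : ℝ)⁻¹ ^ (n + 1) := fun m n h =>
    neg_le_neg (pow_le_pow_of_le_one (by norm_num) (by norm_num) (by omega))
  refine (((isPWO_of_wellQuasiOrderedLE univ).image_of_monotone hmono).insert 0).mono ?_
  rintro x (hx | ⟨n, hn⟩)
  · exact .inl (neg_eq_zero.1 hx)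
  · exact .inr ⟨n, mem_univ n, by simp [hn]⟩

lemma half_le_abs_sub {a b : ℝ} (ha : a ∈ dyadicSet) (hb : b ∈ dyadicSet) (hab : a ≠ b) :
    a / 2 ≤ |a - b| := by
  rcases ha with rfl | ⟨n, rfl⟩
  · simp
  rcases hb with rfl | ⟨m, rfl⟩
  · simp
  dsimp only at hab ⊢
  have hmn : m ≠ n := by rintro rfl; exact hab rfl
  rcases hmn.lt_or_gt with h | h
  · have hle : (2 : ℝ)⁻¹ ^ n ≤ 2⁻¹ ^ (m + 1) := pow_le_pow_of_le_one (by norm_num) (by norm_num) h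
    have hn : (2 : ℝ)⁻¹ ^ n = 2 * 2⁻¹ ^ (n + 1) := by ring
    rw [abs_sub_comm, le_abs]
    left
    linarith [pow_pos (by norm_num : (0 : ℝ) < 2⁻¹) (n + 1)]
  · have hle : (2 : ℝ)⁻¹ ^ (m + 1) ≤ 2⁻¹ ^ (n + 1 + 1) :=
      pow_le_pow_of_le_one (by norm_num) (by norm_num) (by omega)
    have hn : (2 : ℝ)⁻¹ ^ (n + 1 + 1) = 2⁻¹ ^ (n + 1) / 2 := by ring
    rw [le_abs]
    left
    linarith

lemma derivedSet_eq : derivedSet dyadicSet = {0} := by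
  ext x
  refine ⟨fun hx => ?_, ?_⟩
  · rcases (isClosed_iff_derivedSet_subset _).1 isCompact.isClosed hx with rfl | ⟨n, rfl⟩
    · rfl
    refine absurd hx <| not_accPt_of_le_dist (δ := 2⁻¹ ^ (n + 1) / 2) (by positivity)
      fun y hy hne => ?_
    rw [Real.dist_eq, abs_sub_comm]
    exact half_le_abs_sub (.inr ⟨n, rfl⟩) hy hne.symm
  · rintro rfl
    exact accPt_of_tendsto (fun n => .inr ⟨n, rfl⟩) (fun n => (pow_pos (by norm_num) _).ne')
      tendsto_pow

end dyadicSet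

def offsetSet : Set ℝ := image2 (fun a c => a * (1 + c)) dyadicSet dyadicSet

namespace offsetSet

lemma subset_Icc : offsetSet ⊆ Icc 0 (3 / 4) := by
  rintro _ ⟨a, ha, c, hc, rfl⟩
  obtain ⟨ha0, ha1⟩ := dyadicSet.subset_Icc ha
  obtain ⟨hc0, hc1⟩ := dyadicSet.subset_Icc hc
  exact ⟨by positivity, by nlinarith⟩

lemma isCompact : IsCompact offsetSet := by
  rw [offsetSet, ← image_prod]
  exact (dyadicSet.isCompact.prod dyadicSet.isCompact).image (by fun_prop)

lemma countable : offsetSet.Countable :=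
  dyadicSet.countable.image2 dyadicSet.countable _

lemma zero_mem : (0 : ℝ) ∈ offsetSet := ⟨0, .inl rfl, 0, .inl rfl, by norm_num⟩

lemma dyadicSet_subset : dyadicSet ⊆ offsetSet := fun a ha => ⟨a, ha, 0, .inl rfl, by ring⟩

lemma isPWO_neg : (-offsetSet).IsPWO := by
  refine (dyadicSet.isPWO_neg.add dyadicSet.isPWO_neg).mono ?_
  rintro x hx
  obtain ⟨a, ha, c, hc, hac⟩ := mem_neg.1 hx
  dsimp only at hac
  exact ⟨-a, by simpa using ha, -(a * c), by simpa using dyadicSet.mul_mem ha hc,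
    by linear_combination -hac⟩

lemma mul_half_le_abs_sub {a c a' c' : ℝ} (ha : a ∈ dyadicSet) (hc : c ∈ dyadicSet)
    (ha' : a' ∈ dyadicSet) (hc' : c' ∈ dyadicSet) (hne : a * (1 + c) ≠ a' * (1 + c')) :
    a * c / 2 ≤ |a * (1 + c) - a' * (1 + c')| := by
  obtain ⟨ha0, ha1⟩ := dyadicSet.subset_Icc ha
  obtain ⟨hc0, hc1⟩ := dyadicSet.subset_Icc hc
  obtain ⟨ha'0, ha'1⟩ := dyadicSet.subset_Icc ha'
  obtain ⟨hc'0, hc'1⟩ := dyadicSet.subset_Icc hc'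
  by_cases haa : a = a'
  · subst haa
    have hcc : c ≠ c' := by rintro rfl; exact hne rfl
    have := dyadicSet.half_le_abs_sub hc hc' hcc
    rw [show a * (1 + c) - a * (1 + c') = a * (c - c') by ring, abs_mul, abs_of_nonneg ha0]
    nlinarith
  -- offsets with first factor `a` lie in `[a, 3a/2]`, and distinct `a, a'` differ by a factor ≥ 2
  · have h1 := dyadicSet.half_le_abs_sub ha ha' haa
    have h2 := dyadicSet.half_le_abs_sub ha' ha (Ne.symm haa)
    rw [abs_sub_comm] at h2
    rcases lt_or_gt_of_ne haa with h | h
    · rw [abs_of_neg (by linarith)] at h1 h2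
      rw [abs_sub_comm, le_abs]
      left
      nlinarith
    · rw [abs_of_pos (by linarith)] at h1 h2
      rw [le_abs]
      left
      nlinarith

lemma derivedSet_eq : derivedSet offsetSet = dyadicSet := by
  ext x
  refine ⟨fun hx => ?_, fun hx => ?_⟩
  · obtain ⟨a, ha, c, hc, rfl⟩ := (isClosed_iff_derivedSet_subset _).1 isCompact.isClosed hx
    by_cases h : a * c = 0
    · rcases mul_eq_zero.1 h with rfl | rfl <;> simpa using ha
    have hpos : 0 < a * c / 2 := by
      have := (dyadicSet.subset_Icc ha).1
      have := (dyadicSet.subset_Icc hc).1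
      positivity
    refine absurd hx (not_accPt_of_le_dist hpos fun y hy hne => ?_)
    obtain ⟨a', ha', c', hc', rfl⟩ := hy
    rw [Real.dist_eq, abs_sub_comm]
    exact mul_half_le_abs_sub ha hc ha' hc' (Ne.symm hne)
  · rcases hx with rfl | ⟨n, rfl⟩
    · exact derivedSet_mono _ _ dyadicSet_subset (dyadicSet.derivedSet_eq ▸ rfl)
    have ha : (0 : ℝ) < 2⁻¹ ^ (n + 1) := by positivity
    refine accPt_of_tendsto (u := fun m => 2⁻¹ ^ (n + 1) * (1 + 2⁻¹ ^ (m + 1)))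
      (fun m => ⟨_, .inr ⟨n, rfl⟩, _, .inr ⟨m, rfl⟩, rfl⟩) (fun m => ?_) ?_
    · have : (0 : ℝ) < 2⁻¹ ^ (m + 1) := by positivity
      exact ne_of_gt (by nlinarith)
    · simpa using (dyadicSet.tendsto_pow.const_add 1).const_mul ((2 : ℝ)⁻¹ ^ (n + 1))

end offsetSet

lemma two_zpow_neg_natCast (n : ℕ) : (2 : ℝ) ^ (-(n : ℤ)) = 2⁻¹ ^ n := by
  rw [zpow_neg, zpow_natCast, inv_pow]

lemma exampleS₂_eq : exampleS₂ = insert 0 (posNatSub offsetSet) := by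
  ext x
  constructor
  · rintro ((⟨k, l, m, hk, hl, hm, rfl⟩ | ⟨k, l, hk, hl, rfl⟩) | ⟨k, rfl⟩)
    · obtain ⟨n, rfl⟩ := Nat.exists_eq_add_of_le' hl
      obtain ⟨j, rfl⟩ := Nat.exists_eq_add_of_le' hm
      refine .inr ⟨k, hk, _, ⟨_, .inr ⟨n, rfl⟩, _, .inr ⟨j, rfl⟩, rfl⟩, ?_⟩
      rw [show -((↑(n + 1) : ℤ) + ↑(j + 1)) = -((n + 1 + (j + 1) : ℕ) : ℤ) by push_cast; ring,
        two_zpow_neg_natCast, two_zpow_neg_natCast]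
      ring
    · obtain ⟨n, rfl⟩ := Nat.exists_eq_add_of_le' hl
      refine .inr ⟨k, hk, _, ⟨_, .inr ⟨n, rfl⟩, 0, .inl rfl, rfl⟩, ?_⟩
      rw [two_zpow_neg_natCast]
      ring
    · rcases Nat.eq_zero_or_pos k with rfl | hk
      · exact .inl Nat.cast_zero
      · exact .inr ⟨k, hk, 0, offsetSet.zero_mem, sub_zero _⟩
  · rintro (rfl | ⟨k, hk, _, ⟨a, ha, c, hc, rfl⟩, rfl⟩)
    · exact .inr ⟨0, Nat.cast_zero.symm⟩
    rcases ha with rfl | ⟨n, rfl⟩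
    · exact .inr ⟨k, by ring⟩
    rcases hc with rfl | ⟨j, rfl⟩
    · refine .inl (.inr ⟨k, n + 1, hk, by omega, ?_⟩)
      rw [two_zpow_neg_natCast]
      ring
    · refine .inl (.inl ⟨k, n + 1, j + 1, hk, by omega, by omega, ?_⟩)
      rw [show -((↑(n + 1) : ℤ) + ↑(j + 1)) = -((n + 1 + (j + 1) : ℕ) : ℤ) by push_cast; ring,
        two_zpow_neg_natCast, two_zpow_neg_natCast]
      ring

/-- `S` is closed, countable, 1-periodic, well-ordered by `<`, and its second derived
set equals `{1, 2, 3, …}`, in particular it is nonempty. -/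
theorem stmt_17 :
    IsClosed exampleS₂ ∧ exampleS₂.Countable ∧
      (∀ s : ℝ, 0 ≤ s → (s ∈ exampleS₂ ↔ s + 1 ∈ exampleS₂)) ∧
      (∀ f : ℕ → ℝ, (∀ n, f n ∈ exampleS₂) → ¬ StrictAnti f) ∧
      derivedSet (derivedSet exampleS₂) = {x : ℝ | ∃ k : ℕ, 1 ≤ k ∧ x = (k : ℝ)} ∧
      (derivedSet (derivedSet exampleS₂)).Nonempty := by
  have hS'' : derivedSet (derivedSet exampleS₂) = {x : ℝ | ∃ k : ℕ, 1 ≤ k ∧ x = (k : ℝ)} := by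
    have hsingleton : derivedSet ({0} : Set ℝ) = ∅ :=
      eq_empty_of_forall_notMem fun _ hx => Set.Infinite.of_accPt hx (finite_singleton 0)
    rw [exampleS₂_eq, insert_eq, derivedSet_union, hsingleton, empty_union,
      posNatSub.derivedSet_eq offsetSet.isCompact offsetSet.subset_Icc (by norm_num),
      offsetSet.derivedSet_eq,
      posNatSub.derivedSet_eq dyadicSet.isCompact dyadicSet.subset_Icc (by norm_num),
      dyadicSet.derivedSet_eq]
    ext x
    simp [posNatSub, eq_comm]
  refine ⟨?_, ?_, ?_, ?_, hS'', hS'' ▸ ⟨1, 1, le_rfl, by norm_num⟩⟩ <;> rw [exampleS₂_eq]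
  · rw [insert_eq]
    exact isClosed_singleton.union (posNatSub.isClosed offsetSet.isCompact)
  · exact (posNatSub.countable offsetSet.countable).insert 0
  · exact fun s => posNatSub.mem_insert_zero_iff_add_one_mem offsetSet.zero_mem
      (offsetSet.subset_Icc.trans Icc_subset_Ici_self)
  · intro f hf hanti
    obtain ⟨m, n, hmn, hle⟩ := ((posNatSub.isPWO offsetSet.isPWO_neg).insert 0).exists_lt hf
    exact (hanti hmn).not_ge hle
end

section
/- Let (τ_s)_{s∈I} be a countable family of independent exponential random variables, τ_s with rate λ_s > 0, where Σ_{s∈I} λ_s < ∞. Then almost surely inf_{s∈I} τ_s > 0, the infimum is attained at a unique index, and T = inf_s τ_s is exponentially distributed with rate Σ_s λ_s. -/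
/-! Since `P (τ i ≤ q) ≤ λ i * q` is summable, Borel–Cantelli shows that almost surely only
finitely many `τ i` lie below any level, so the infimum is a minimum. The law of each `τ i` is
`Exp(λ i)`, which has no atoms, so independent `τ i`, `τ j` tie with probability zero and the
minimiser is unique. Once the infimum is attained, `{s < ⨅ i, τ i}` is a.s. `⋂ i, {s < τ i}`, whose
probability is the limit over finite sets `F` of `∏ i ∈ F, e^{-λ i s} = e^{-(∑ i ∈ F, λ i) s}`. -/

open MeasureTheory ProbabilityTheory Filter Topology

instance ProbabilityTheory.nullSingletonClass_expMeasure (r : ℝ) :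
    NullSingletonClass (expMeasure r) :=
  inferInstanceAs (NullSingletonClass (volume.withDensity _))

theorem ProbabilityTheory.IndepFun.measure_eq_eq_zero {Ω α : Type*} [MeasurableSpace Ω]
    {P : Measure Ω} [IsFiniteMeasure P] [MeasurableSpace α] [MeasurableEq α] {X Y : Ω → α}
    (hXY : IndepFun X Y P) (hX : AEMeasurable X P) (hY : AEMeasurable Y P)
    [NullSingletonClass (P.map Y)] :
    P {ω | X ω = Y ω} = 0 := by
  have hdiag : {ω | X ω = Y ω} = (fun ω => (X ω, Y ω)) ⁻¹' Set.diagonal α := rfl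
  rw [hdiag, ← Measure.map_apply_of_aemeasurable (hX.prodMk hY) measurableSet_diagonal,
    (indepFun_iff_map_prod_eq_prod_map_map hX hY).1 hXY, Measure.prod_apply measurableSet_diagonal]
  simp [Set.preimage, Set.diagonal]

theorem ae_injective_of_pairwise_measure_eq_eq_zero {Ω I α : Type*} [MeasurableSpace Ω]
    {P : Measure Ω} [Countable I]
    {τ : I → Ω → α} (h : Pairwise fun i j => P {ω | τ i ω = τ j ω} = 0) :
    ∀ᵐ ω ∂P, Function.Injective fun i => τ i ω := by
  have hne : ∀ᵐ ω ∂P, ∀ i j, i ≠ j → τ i ω ≠ τ j ω := by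
    refine ae_all_iff.2 fun i => ae_all_iff.2 fun j => ?_
    rcases eq_or_ne i j with rfl | hij
    · exact ae_of_all _ fun _ h => (h rfl).elim
    · filter_upwards [measure_eq_zero_iff_ae_notMem.1 (h hij)] with ω hω _ using hω
  filter_upwards [hne] with ω hω i j hij
  by_contra hne
  exact hω i j hne hij

theorem exists_forall_le_of_finite_setOf_le {I : Type*} [Nonempty I] {f : I → ℝ}
    (hf : ∀ n : ℕ, {i | f i ≤ n}.Finite) : ∃ i, ∀ j, f i ≤ f j := by
  obtain ⟨i₀⟩ := ‹Nonempty I›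
  have hfin : {i | f i ≤ f i₀}.Finite :=
    (hf ⌈f i₀⌉₊).subset fun i (h : f i ≤ f i₀) => h.trans (Nat.le_ceil _)
  obtain ⟨i, hi, hmin⟩ := Set.exists_min_image _ f hfin ⟨i₀, le_refl (f i₀)⟩
  exact ⟨i, fun j => (le_total (f j) (f i₀)).elim (hmin j) fun h => le_trans hi h⟩

section

variable {Ω : Type*} [MeasurableSpace Ω] {P : Measure Ω}

section ExpTail

variable [IsProbabilityMeasure P] {X : Ω → ℝ} {r : ℝ}

theorem measure_le_eq_one_sub_exp (hX : Measurable X)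
    (hexp : ∀ s : ℝ, 0 ≤ s → P {ω | s < X ω} = ENNReal.ofReal (Real.exp (-r * s)))
    {q : ℝ} (hq : 0 ≤ q) :
    P {ω | X ω ≤ q} = ENNReal.ofReal (1 - Real.exp (-r * q)) := by
  have hcompl : {ω | X ω ≤ q} = {ω | q < X ω}ᶜ := by ext; simp
  rw [hcompl, prob_compl_eq_one_sub (measurableSet_lt measurable_const hX), hexp q hq,
    ENNReal.ofReal_sub _ (Real.exp_pos _).le, ENNReal.ofReal_one]

theorem ae_pos_of_exp_tail (hX : Measurable X)
    (hexp : ∀ s : ℝ, 0 ≤ s → P {ω | s < X ω} = ENNReal.ofReal (Real.exp (-r * s))) :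
    ∀ᵐ ω ∂P, 0 < X ω :=
  (ae_iff_measure_eq (measurableSet_lt measurable_const hX).nullMeasurableSet).2 <| by
    simpa using hexp 0 le_rfl

theorem map_eq_expMeasure (hr : 0 < r) (hX : Measurable X)
    (hexp : ∀ s : ℝ, 0 ≤ s → P {ω | s < X ω} = ENNReal.ofReal (Real.exp (-r * s))) :
    P.map X = expMeasure r := by
  have := isProbabilityMeasure_expMeasure hr
  have := Measure.isProbabilityMeasure_map (μ := P) hX.aemeasurable
  refine Measure.eq_of_cdf _ _ (StieltjesFunction.ext fun q => ?_)
  rw [cdf_expMeasure_eq hr, cdf_eq_real, map_measureReal_apply hX measurableSet_Iic,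
    measureReal_def, show X ⁻¹' Set.Iic q = {ω | X ω ≤ q} from rfl]
  split_ifs with hq
  · rw [measure_le_eq_one_sub_exp hX hexp hq, neg_mul,
      ENNReal.toReal_ofReal (sub_nonneg.2 (Real.exp_le_one_iff.2 (by nlinarith)))]
  · have hnonpos : P {ω | X ω ≤ 0} = 0 := by simp [measure_le_eq_one_sub_exp hX hexp le_rfl]
    have hsub : {ω | X ω ≤ q} ⊆ {ω | X ω ≤ 0} := fun ω h => le_trans h (not_le.1 hq).le
    rw [measure_mono_null hsub hnonpos, ENNReal.toReal_zero]

end ExpTail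

section Family

variable {I : Type*} {τ : I → Ω → ℝ} {lam : I → ℝ}

theorem measure_biInter_lt_eq_exp (hindep : iIndepFun τ P)
    (hexp : ∀ i, ∀ s : ℝ, 0 ≤ s →
      P {ω | s < τ i ω} = ENNReal.ofReal (Real.exp (-(lam i) * s)))
    (F : Finset I) {s : ℝ} (hs : 0 ≤ s) :
    P (⋂ i ∈ F, {ω | s < τ i ω}) = ENNReal.ofReal (Real.exp (-(∑ i ∈ F, lam i) * s)) := by
  rw [hindep.meas_biInter (s := fun i => {ω | s < τ i ω})
      fun i _ => ⟨Set.Ioi s, measurableSet_Ioi, rfl⟩,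
    Finset.prod_congr rfl fun i _ => hexp i s hs,
    ← ENNReal.ofReal_prod_of_nonneg fun i _ => (Real.exp_pos _).le, ← Real.exp_sum]
  simp only [neg_mul, Finset.sum_neg_distrib, Finset.sum_mul]

variable [IsProbabilityMeasure P]

theorem measure_iInter_lt_eq_exp [Countable I] (hsum : Summable lam)
    (hmeas : ∀ i, Measurable (τ i)) (hindep : iIndepFun τ P)
    (hexp : ∀ i, ∀ s : ℝ, 0 ≤ s →
      P {ω | s < τ i ω} = ENNReal.ofReal (Real.exp (-(lam i) * s)))
    {s : ℝ} (hs : 0 ≤ s) :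
    P (⋂ i, {ω | s < τ i ω}) = ENNReal.ofReal (Real.exp (-(∑' i, lam i) * s)) := by
  have hanti : Antitone fun F : Finset I => ⋂ i ∈ F, {ω | s < τ i ω} :=
    fun _ _ hFG => Set.biInter_subset_biInter_left hFG
  have hlim := tendsto_measure_iInter_atTop (fun F => (F.measurableSet_biInter fun i _ =>
    measurableSet_lt measurable_const (hmeas i)).nullMeasurableSet) hanti ⟨∅, measure_ne_top P _⟩
  rw [← Set.iInter_eq_iInter_finset] at hlim
  simp only [Function.comp_def, measure_biInter_lt_eq_exp hindep hexp _ hs] at hlim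
  have hpartial : Tendsto (fun F : Finset I => ∑ i ∈ F, lam i) atTop (𝓝 (∑' i, lam i)) :=
    hsum.hasSum
  exact tendsto_nhds_unique hlim
    ((ENNReal.continuous_ofReal.tendsto _).comp (hpartial.neg.mul_const s).rexp)

theorem ae_finite_setOf_le [Countable I] (hnonneg : ∀ i, 0 ≤ lam i) (hsum : Summable lam)
    (hmeas : ∀ i, Measurable (τ i))
    (hexp : ∀ i, ∀ s : ℝ, 0 ≤ s →
      P {ω | s < τ i ω} = ENNReal.ofReal (Real.exp (-(lam i) * s)))
    {q : ℝ} (hq : 0 ≤ q) :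
    ∀ᵐ ω ∂P, {i | τ i ω ≤ q}.Finite := by
  have hle : ∀ i, P {ω | τ i ω ≤ q} ≤ ENNReal.ofReal (lam i * q) := fun i => by
    rw [measure_le_eq_one_sub_exp (hmeas i) (hexp i) hq]
    exact ENNReal.ofReal_le_ofReal (by linarith [Real.add_one_le_exp (-lam i * q)])
  refine ae_finite_setOfPred_mem (ne_top_of_le_ne_top ?_ (ENNReal.tsum_le_tsum hle))
  rw [← ENNReal.ofReal_tsum_of_nonneg (fun i => mul_nonneg (hnonneg i) hq) (hsum.mul_right q)]
  exact ENNReal.ofReal_ne_top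

theorem ae_injective_of_iIndepFun_exp [Countable I] (hpos : ∀ i, 0 < lam i)
    (hmeas : ∀ i, Measurable (τ i)) (hindep : iIndepFun τ P)
    (hexp : ∀ i, ∀ s : ℝ, 0 ≤ s →
      P {ω | s < τ i ω} = ENNReal.ofReal (Real.exp (-(lam i) * s))) :
    ∀ᵐ ω ∂P, Function.Injective fun i => τ i ω :=
  ae_injective_of_pairwise_measure_eq_eq_zero fun i j hij => by
    have : NullSingletonClass (P.map (τ j)) := by
      rw [map_eq_expMeasure (hpos j) (hmeas j) (hexp j)]
      infer_instance
    exact (hindep.indepFun hij).measure_eq_eq_zero (hmeas i).aemeasurable (hmeas j).aemeasurable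

end Family

end

/-- For a countable family of independent exponential random variables `τ_i` with rates
`λ_i > 0` and `Σ λ_i < ∞`: almost surely `inf_i τ_i > 0` and the infimum is attained at
a unique index; moreover `T = inf_i τ_i` is exponential with rate `Σ λ_i`. -/
theorem stmt_18 {Ω : Type*} [MeasurableSpace Ω] (P : Measure Ω) [IsProbabilityMeasure P]
    {I : Type*} [Countable I] [Nonempty I]
    (τ : I → Ω → ℝ) (lam : I → ℝ) (hpos : ∀ i, 0 < lam i) (hsum : Summable lam)
    (hmeas : ∀ i, Measurable (τ i))
    (hindep : iIndepFun τ P)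
    (hexp : ∀ i, ∀ s : ℝ, 0 ≤ s →
      P {ω | s < τ i ω} = ENNReal.ofReal (Real.exp (-(lam i) * s))) :
    (∀ᵐ ω ∂P, 0 < ⨅ i, τ i ω) ∧
      (∀ᵐ ω ∂P, ∃! i, τ i ω = ⨅ j, τ j ω) ∧
      ∀ s : ℝ, 0 ≤ s →
        P {ω | s < ⨅ i, τ i ω} = ENNReal.ofReal (Real.exp (-(∑' i, lam i) * s)) := by
  have hmin : ∀ᵐ ω ∂P, ∃ i, ∀ j, τ i ω ≤ τ j ω := by
    filter_upwards [ae_all_iff.2 fun n : ℕ =>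
      ae_finite_setOf_le (fun i => (hpos i).le) hsum hmeas hexp n.cast_nonneg] with ω hω
    exact exists_forall_le_of_finite_setOf_le hω
  have hmin_eq : ∀ ω i, (∀ j, τ i ω ≤ τ j ω) → ⨅ j, τ j ω = τ i ω := fun ω i hi =>
    ciInf_eq_of_forall_ge_of_forall_gt_exists_lt hi fun _ hw => ⟨i, hw⟩
  refine ⟨?_, ?_, fun s hs => ?_⟩
  · filter_upwards [hmin, ae_all_iff.2 fun i => ae_pos_of_exp_tail (hmeas i) (hexp i)]
      with ω ⟨i, hi⟩ hτpos
    exact (hmin_eq ω i hi).symm ▸ hτpos i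
  · filter_upwards [hmin, ae_injective_of_iIndepFun_exp hpos hmeas hindep hexp]
      with ω ⟨i, hi⟩ hinj
    exact ⟨i, (hmin_eq ω i hi).symm, fun j hj => hinj (hj.trans (hmin_eq ω i hi))⟩
  · rw [← measure_iInter_lt_eq_exp hsum hmeas hindep hexp hs]
    refine measure_congr (Eventually.set_eq ?_)
    filter_upwards [hmin] with ω ⟨i, hi⟩
    simp only [Set.mem_ofPred_eq, Set.mem_iInter, hmin_eq ω i hi]
    exact ⟨fun h j => h.trans_le (hi j), fun h => h i⟩
end
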